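/- Let R be a (left) nearfield which is not distributive, i.e. there exist α, β, λ ∈ R with (α+β)·λ ≠ α·λ + β·λ, and let n be a positive integer. A subset N ⊆ R^n is a subspace of R^n if and only if there exists a set J ⊆ {1, …, n} such that N = { x ∈ R^n : x_j = 0 for all j ∉ J }; equivalently, the subspaces of R^n are exactly the sets S_1 × S_2 × ⋯ × S_n where each S_i is either {0} or R. -/

import Mathlib

/-- A (left) nearfield: `(R,+)` is an abelian group, multiplication is associative
with identity `1 ≠ 0`, every nonzero element has a two-sided inverse,
`0` multiplies to `0` on both sides, and the left distributive law holds. -/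
class Nearfield (R : Type*) extends AddCommGroup R, One R, Mul R where
  mul_assoc : ∀ a b c : R, a * b * c = a * (b * c)
  one_mul : ∀ a : R, 1 * a = a
  mul_one : ∀ a : R, a * 1 = a
  one_ne_zero : (1 : R) ≠ 0
  zero_mul : ∀ a : R, 0 * a = 0
  mul_zero : ∀ a : R, a * 0 = 0
  left_distrib : ∀ a b c : R, a * (b + c) = a * b + a * c
  exists_inv : ∀ a : R, a ≠ 0 → ∃ b : R, a * b = 1 ∧ b * a = 1

variable {R : Type*} [Nearfield R] {n : ℕ}

/-- Right scalar multiplication on `R^n`: `(x · r) j = x j * r`. -/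
def vsmul (x : Fin n → R) (r : R) : Fin n → R := fun j => x j * r

/-- An `R`-subgroup of `R^n`: an additive subgroup closed under right scalar
multiplication. -/
def IsRSubgroup (S : Set (Fin n → R)) : Prop :=
  (0 : Fin n → R) ∈ S ∧ (∀ x ∈ S, ∀ y ∈ S, x + y ∈ S) ∧ (∀ x ∈ S, -x ∈ S) ∧
    ∀ x ∈ S, ∀ r : R, vsmul x r ∈ S

/-- `nvGen V` is the smallest `R`-subgroup of `R^n` containing `V`
(the intersection of all `R`-subgroups containing `V`). -/
def nvGen (V : Set (Fin n → R)) : Set (Fin n → R) :=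
  { x | ∀ S : Set (Fin n → R), IsRSubgroup S → V ⊆ S → x ∈ S }

/-- A subspace of `R^n`: an additive subgroup `N` with `(x+y)·r − x·r ∈ N`
for all `x ∈ R^n`, `y ∈ N`, `r ∈ R`. -/
def IsSubspace (N : Set (Fin n → R)) : Prop :=
  (0 : Fin n → R) ∈ N ∧ (∀ x ∈ N, ∀ y ∈ N, x + y ∈ N) ∧ (∀ x ∈ N, -x ∈ N) ∧
    ∀ x : Fin n → R, ∀ y ∈ N, ∀ r : R, vsmul (x + y) r - vsmul x r ∈ N

/-- `nvSpan V` is the smallest subspace of `R^n` containing `V`. -/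
def nvSpan (V : Set (Fin n → R)) : Set (Fin n → R) :=
  { x | ∀ N : Set (Fin n → R), IsSubspace N → V ⊆ N → x ∈ N }

/-- `nvLC V 0 = V` and `nvLC V (m+1)` is the set of all finite right `R`-linear
combinations of elements of `nvLC V m`. -/
def nvLC (V : Set (Fin n → R)) : ℕ → Set (Fin n → R)
  | 0 => V
  | m + 1 => { x | ∃ F : Finset (Fin n → R), ↑F ⊆ nvLC V m ∧
      ∃ lam : (Fin n → R) → R, x = ∑ w ∈ F, vsmul w (lam w) }

/-!
If `z` lies in a subspace `N`, then so does `(e_j α + z)λ - (e_j α)λ - zλ = e_j δ` with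
`δ = (α + z_j)λ - (αλ + z_jλ)`, and right scaling makes every `β` occur as `z_j` once some
element of `N` has a nonzero `j`-th coordinate. Non-distributivity makes some such `δ`
nonzero, and right scaling by `δ⁻¹ r` then puts every `e_j r` into `N`. Hence `N`
contains each coordinate axis it touches, and is the sum of them.
-/

lemma vsmul_zero_left (r : R) : vsmul (0 : Fin n → R) r = 0 := by
  funext k
  exact Nearfield.zero_mul r

lemma vsmul_single [DecidableEq (Fin n)] (j : Fin n) (a r : R) :
    vsmul (Pi.single j a) r = Pi.single j (a * r) := by
  funext k
  by_cases hk : k = j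
  · subst hk; simp [vsmul]
  · simp [vsmul, Pi.single_eq_of_ne hk, Nearfield.zero_mul]

lemma vsmul_add_single_sub [DecidableEq (Fin n)] (j : Fin n) (a : R) (y : Fin n → R) (r : R) :
    vsmul (Pi.single j a + y) r - vsmul (Pi.single j a) r - vsmul y r
      = Pi.single j ((a + y j) * r - (a * r + y j * r)) := by
  funext k
  by_cases hk : k = j
  · subst hk; simp [vsmul, sub_sub]
  · simp [vsmul, Pi.single_eq_of_ne hk, Nearfield.zero_mul]

namespace IsSubspace

variable {N : Set (Fin n → R)}

def toAddSubgroup (hN : IsSubspace N) : AddSubgroup (Fin n → R) where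
  carrier := N
  zero_mem' := hN.1
  add_mem' hx hy := hN.2.1 _ hx _ hy
  neg_mem' hx := hN.2.2.1 _ hx

lemma vsmul_mem (hN : IsSubspace N) {y : Fin n → R} (hy : y ∈ N) (r : R) : vsmul y r ∈ N := by
  simpa [vsmul_zero_left] using hN.2.2.2 0 y hy r

lemma exists_mem_apply_eq (hN : IsSubspace N) {j : Fin n} {y : Fin n → R} (hy : y ∈ N)
    (hyj : y j ≠ 0) (b : R) : ∃ z ∈ N, z j = b := by
  obtain ⟨c, hc, -⟩ := Nearfield.exists_inv (y j) hyj
  refine ⟨vsmul y (c * b), hN.vsmul_mem hy _, ?_⟩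
  simp [vsmul, ← Nearfield.mul_assoc, hc, Nearfield.one_mul]

lemma single_mem_of_single_mem [DecidableEq (Fin n)] (hN : IsSubspace N) {j : Fin n} {d : R}
    (hd : d ≠ 0) (hdN : Pi.single j d ∈ N) (r : R) : Pi.single j r ∈ N := by
  obtain ⟨c, hc, -⟩ := Nearfield.exists_inv d hd
  have h := hN.vsmul_mem hdN (c * r)
  rwa [vsmul_single, ← Nearfield.mul_assoc, hc, Nearfield.one_mul] at h

lemma single_mem [DecidableEq (Fin n)] (hN : IsSubspace N)
    (hR : ∃ α β lam : R, (α + β) * lam ≠ α * lam + β * lam)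
    {j : Fin n} {y : Fin n → R} (hy : y ∈ N) (hyj : y j ≠ 0) (r : R) :
    Pi.single j r ∈ N := by
  obtain ⟨α, β, lam, hαβ⟩ := hR
  obtain ⟨z, hzN, rfl⟩ := hN.exists_mem_apply_eq hy hyj β
  have hdefect : vsmul (Pi.single j α + z) lam - vsmul (Pi.single j α) lam - vsmul z lam ∈ N :=
    hN.toAddSubgroup.sub_mem (hN.2.2.2 _ z hzN lam) (hN.vsmul_mem hzN lam)
  rw [vsmul_add_single_sub] at hdefect
  exact hN.single_mem_of_single_mem (sub_ne_zero.mpr hαβ) hdefect r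

end IsSubspace

lemma isSubspace_setOf_apply_eq_zero (J : Set (Fin n)) :
    IsSubspace { x : Fin n → R | ∀ j ∉ J, x j = 0 } := by
  refine ⟨fun _ _ => rfl, ?_, ?_, ?_⟩
  · intro x hx y hy j hj
    simp [hx j hj, hy j hj]
  · intro x hx j hj
    simp [hx j hj]
  · intro x y hy r j hj
    simp [vsmul, hy j hj]

theorem isSubspace_iff_coordinate_general
    (hd : ∃ α β lam : R, (α + β) * lam ≠ α * lam + β * lam)
    (N : Set (Fin n → R)) :
    IsSubspace N ↔
      ∃ J : Set (Fin n), N = { x : Fin n → R | ∀ j ∉ J, x j = 0 } := by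
  classical
  refine ⟨fun hN => ⟨{ j | ∃ y ∈ N, y j ≠ 0 }, ?_⟩, ?_⟩
  · ext x
    refine ⟨fun hx j hj => not_not.mp fun h => hj ⟨x, hx, h⟩, fun hx => ?_⟩
    have hsingle : ∀ j, Pi.single j (x j) ∈ N := fun j => by
      by_cases hxj : x j = 0
      · simpa [hxj] using hN.1
      · obtain ⟨y, hy, hyj⟩ := not_not.mp (mt (hx j) hxj)
        exact hN.single_mem hd hy hyj _
    rw [← Finset.univ_sum_single x]
    exact hN.toAddSubgroup.sum_mem fun j _ => hsingle j
  · rintro ⟨J, rfl⟩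
    exact isSubspace_setOf_apply_eq_zero J

/-- in a non-distributive nearfield, `N ⊆ R^n` is a subspace iff
it is a coordinate subspace `{x | x_j = 0 for all j ∉ J}` for some `J`. -/
theorem isSubspace_iff_coordinate
    (hd : ∃ α β lam : R, (α + β) * lam ≠ α * lam + β * lam)
    (hn : 0 < n) (N : Set (Fin n → R)) :
    IsSubspace N ↔
      ∃ J : Set (Fin n), N = { x : Fin n → R | ∀ j ∉ J, x j = 0 } :=
  isSubspace_iff_coordinate_general hd N
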